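/- arXiv:1912.07702 — 3 statements merged into one kernel-verified Lean document; each statement's English description precedes it below -/
import Mathlib

section
/- Let E be a real inner product space, X ⊆ E a nonempty convex compact set, M > 0 and ε > 0. Let f : E → ℝ satisfy |f(x) − f(y)| ≤ M‖x − y‖ for all x, y ∈ X. Let x₁, …, x_k ∈ X and g₁, …, g_k ∈ E satisfy ‖g_i‖ ≤ M and f(x) ≥ f(x_i) + ⟨g_i, x − x_i⟩ for all x ∈ X and every i = 1, …, k. Define the cutting plane model m(x) := max_{1≤i≤k} ( f(x_i) + ⟨g_i, x − x_i⟩ ). Suppose x_{k+1} ∈ X satisfies m(x_{k+1}) ≤ m(x) for all x ∈ X. If min_{1≤i≤k} f(x_i) − m(x_{k+1}) > ε, then ‖x_{k+1} − x_i‖ > ε/M for every i = 1, …, k. -/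
open scoped RealInnerProductSpace

/-!
The cut of `xᵢ` evaluated at `x_{k+1}` is at most `m(x_{k+1}) < min_j f(x_j) - ε ≤ f(xᵢ) - ε`, so
`⟪gᵢ, x_{k+1} - xᵢ⟫ < -ε`; by Cauchy–Schwarz and `‖gᵢ‖ ≤ M` this forces `M ‖x_{k+1} - xᵢ‖ > ε`.
-/

theorem lt_neg_of_lt_iInf_sub_iSup_add {ι : Type*} [Finite ι] (a c : ι → ℝ) {ε : ℝ}
    (h : ε < (⨅ j, a j) - ⨆ j, (a j + c j)) (i : ι) : c i < -ε := by
  have hsup := le_ciSup (Finite.bddAbove_range fun j => a j + c j) i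
  have hinf := ciInf_le (Finite.bddBelow_range a) i
  linarith

theorem div_lt_norm_of_inner_lt_neg {E : Type*} [NormedAddCommGroup E] [InnerProductSpace ℝ E]
    {g v : E} {M ε : ℝ} (hM : 0 < M) (hg : ‖g‖ ≤ M) (h : ⟪g, v⟫ < -ε) : ε / M < ‖v‖ := by
  rw [div_lt_iff₀ hM]
  calc ε < -⟪g, v⟫ := by linarith
    _ ≤ ‖g‖ * ‖v‖ := (neg_le_abs _).trans (abs_real_inner_le_norm g v)
    _ ≤ M * ‖v‖ := by gcongr
    _ = ‖v‖ * M := mul_comm _ _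

theorem cutting_plane_separation_general
    {E : Type*} [NormedAddCommGroup E] [InnerProductSpace ℝ E]
    (M ε : ℝ) (hM : 0 < M)
    (f : E → ℝ)
    (k : ℕ)
    (x : Fin k → E) (g : Fin k → E)
    (hg : ∀ i, ‖g i‖ ≤ M)
    (m : E → ℝ)
    (hm : ∀ y, m y = ⨆ i : Fin k, (f (x i) + ⟪g i, y - x i⟫))
    (xnew : E)
    (hgap : (⨅ i : Fin k, f (x i)) - m xnew > ε) :
    ∀ i : Fin k, ‖xnew - x i‖ > ε / M := by
  intro i
  rw [hm] at hgap
  exact div_lt_norm_of_inner_lt_neg hM (hg i)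
    (lt_neg_of_lt_iInf_sub_iSup_add (fun j => f (x j)) (fun j => ⟪g j, xnew - x j⟫) hgap i)

/-- Separation property of Kelley's cutting plane method (Proposition 2.1, first part). -/
theorem cutting_plane_separation
    {E : Type*} [NormedAddCommGroup E] [InnerProductSpace ℝ E]
    (X : Set E) (hXne : X.Nonempty) (hXconv : Convex ℝ X) (hXcomp : IsCompact X)
    (M ε : ℝ) (hM : 0 < M) (hε : 0 < ε)
    (f : E → ℝ) (hf : ∀ x ∈ X, ∀ y ∈ X, |f x - f y| ≤ M * ‖x - y‖)
    (k : ℕ) (hk : 0 < k)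
    (x : Fin k → E) (g : Fin k → E)
    (hxX : ∀ i, x i ∈ X)
    (hg : ∀ i, ‖g i‖ ≤ M)
    (hcut : ∀ i, ∀ y ∈ X, f (x i) + ⟪g i, y - x i⟫ ≤ f y)
    (m : E → ℝ)
    (hm : ∀ y, m y = ⨆ i : Fin k, (f (x i) + ⟪g i, y - x i⟫))
    (xnew : E) (hxnewX : xnew ∈ X)
    (hmin : ∀ y ∈ X, m xnew ≤ m y)
    (hgap : (⨅ i : Fin k, f (x i)) - m xnew > ε) :
    ∀ i : Fin k, ‖xnew - x i‖ > ε / M :=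
  cutting_plane_separation_general M ε hM f k x g hg m hm xnew hgap
end

section
/- Let n be a positive integer, l, M, ε > 0, and let X ⊆ ℝⁿ be a nonempty set contained in a box with side length l. Equip ℝⁿ with the sup norm ‖z‖_∞ := max_j |z_j|. Let f : ℝⁿ → ℝ satisfy |f(x) − f(y)| ≤ M‖x − y‖_∞ for all x, y ∈ X. Let K be a positive integer and suppose x₁, …, x_{K+1} ∈ X and g₁, …, g_K ∈ ℝⁿ are such that: (a) for each i = 1,…,K, ∑_j |(g_i)_j| ≤ M and f(x) ≥ f(x_i) + ⟨g_i, x − x_i⟩ for all x ∈ X; (b) for each k = 1,…,K, the point x_{k+1} minimizes the cutting plane model m_k(x) := max_{1≤i≤k}( f(x_i) + ⟨g_i, x − x_i⟩ ) over X; (c) for each k = 1,…,K, min_{1≤i≤k} f(x_i) − m_k(x_{k+1}) > ε. Then K + 1 ≤ (lM/ε + 1)ⁿ. -/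
/-! Each cut `i ≤ k` belongs to the model `m k`, so a gap larger than `ε` at step `k` means that
the cut through `x i` drops by more than `ε` from `x i` to `x (k + 1)`. Its slope has dual norm at
most `M`, hence the iterates `x 1, …, x (K + 1)` are pairwise more than `ε / M` apart in the sup
norm. A grid of mesh `ε / M` cuts the box into at most `(l M / ε + 1) ^ n` cells, and each cell
holds at most one iterate. -/

lemma abs_sum_mul_le_sum_abs_mul_norm {ι : Type*} [Fintype ι] (g v : ι → ℝ) :
    |∑ j, g j * v j| ≤ (∑ j, |g j|) * ‖v‖ := by
  calc |∑ j, g j * v j| ≤ ∑ j, |g j| * |v j| := by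
        simpa only [abs_mul] using Finset.abs_sum_le_sum_abs (fun j => g j * v j) _
    _ ≤ ∑ j, |g j| * ‖v‖ := by
        gcongr with j
        exact norm_le_pi_norm v j
    _ = (∑ j, |g j|) * ‖v‖ := (Finset.sum_mul ..).symm

lemma abs_sub_lt_of_natFloor_div_eq {a s t δ : ℝ} (hδ : 0 < δ) (hs : a ≤ s) (ht : a ≤ t)
    (h : ⌊(s - a) / δ⌋₊ = ⌊(t - a) / δ⌋₊) : |s - t| < δ := by
  have hint : ⌊(s - a) / δ⌋ = ⌊(t - a) / δ⌋ := by
    rw [← Int.natCast_floor_eq_floor (by positivity), ← Int.natCast_floor_eq_floor (by positivity),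
      h]
  have hdiv := Int.abs_sub_lt_one_of_floor_eq_floor hint
  rwa [← sub_div, sub_sub_sub_cancel_right, abs_div, abs_of_pos hδ, div_lt_one hδ] at hdiv

lemma card_le_of_pairwise_separated_in_box {ι κ : Type*} [Fintype ι] [Fintype κ]
    {l δ : ℝ} (hl : 0 ≤ l) (hδ : 0 < δ) (a : ι → ℝ) (y : κ → ι → ℝ)
    (hbox : ∀ p j, y p j ∈ Set.Icc (a j) (a j + l))
    (hsep : Pairwise fun p q => δ < ‖y p - y q‖) :
    (Fintype.card κ : ℝ) ≤ (l / δ + 1) ^ Fintype.card ι := by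
  classical
  have hcell (p : κ) (j : ι) : ⌊(y p j - a j) / δ⌋₊ < ⌊l / δ⌋₊ + 1 :=
    Nat.lt_succ_of_le <| Nat.floor_le_floor <| by
      gcongr
      linarith [(hbox p j).2]
  let cell : κ → ι → Fin (⌊l / δ⌋₊ + 1) := fun p j => ⟨_, hcell p j⟩
  have hinj : Function.Injective cell := by
    intro p q hpq
    by_contra hne
    refine (hsep hne).not_ge ((pi_norm_lt_iff hδ).2 fun j => ?_).le
    exact abs_sub_lt_of_natFloor_div_eq hδ (hbox p j).1 (hbox q j).1
      (congrArg Fin.val (congrFun hpq j))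
  have hcard : Fintype.card κ ≤ (⌊l / δ⌋₊ + 1) ^ Fintype.card ι := by
    simpa using Fintype.card_le_of_injective cell hinj
  calc (Fintype.card κ : ℝ) ≤ ((⌊l / δ⌋₊ + 1 : ℕ) : ℝ) ^ Fintype.card ι := mod_cast hcard
    _ ≤ (l / δ + 1) ^ Fintype.card ι := by
        push_cast
        gcongr
        exact Nat.floor_le (by positivity)

lemma div_lt_norm_of_lt_neg_sum_mul {ι : Type*} [Fintype ι] {M ε : ℝ} {g v : ι → ℝ}
    (hM : 0 < M) (hg : ∑ j, |g j| ≤ M) (h : ε < -∑ j, g j * v j) : ε / M < ‖v‖ := by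
  rw [div_lt_iff₀' hM]
  calc ε < |∑ j, g j * v j| := h.trans_le (neg_le_abs _)
    _ ≤ (∑ j, |g j|) * ‖v‖ := abs_sum_mul_le_sum_abs_mul_norm g v
    _ ≤ M * ‖v‖ := by gcongr

lemma div_lt_norm_iterate_sub_of_gap {n : ℕ} {M ε : ℝ} (hM : 0 < M)
    {f : (Fin n → ℝ) → ℝ} {x g : ℕ → Fin n → ℝ} {m : ℕ → (Fin n → ℝ) → ℝ}
    (hm : ∀ k y, m k y =
      ⨆ i : Fin k, (f (x (i + 1)) + ∑ j, g (i + 1) j * (y j - x (i + 1) j)))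
    {p q : ℕ} (hp : 1 ≤ p) (hpq : p ≤ q) (hgdual : ∑ j, |g p j| ≤ M)
    (hgap : (⨅ i : Fin q, f (x (i + 1))) - m q (x (q + 1)) > ε) :
    ε / M < ‖x (q + 1) - x p‖ := by
  obtain ⟨i, rfl⟩ : ∃ i : Fin q, (i : ℕ) + 1 = p := ⟨⟨p - 1, by omega⟩, Nat.sub_add_cancel hp⟩
  have hcut :
      f (x (i + 1)) + ∑ j, g (i + 1) j * (x (q + 1) j - x (i + 1) j) ≤ m q (x (q + 1)) := by
    rw [hm]
    exact le_ciSup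
      (f := fun k : Fin q => f (x (k + 1)) + ∑ j, g (k + 1) j * (x (q + 1) j - x (k + 1) j))
      (Finite.bddAbove_range _) i
  have hrecord : ⨅ i : Fin q, f (x (i + 1)) ≤ f (x (i + 1)) :=
    ciInf_le (Finite.bddBelow_range _) i
  refine div_lt_norm_of_lt_neg_sum_mul hM hgdual ?_
  simp only [Pi.sub_apply]
  linarith

theorem cutting_plane_complexity_general
    (n : ℕ) (l M ε : ℝ) (hl : 0 < l) (hM : 0 < M) (hε : 0 < ε)
    (X : Set (Fin n → ℝ)) (a : Fin n → ℝ)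
    (hbox : ∀ x ∈ X, ∀ j, x j ∈ Set.Icc (a j) (a j + l))
    (f : (Fin n → ℝ) → ℝ)
    (K : ℕ)
    (x : ℕ → (Fin n → ℝ)) (g : ℕ → (Fin n → ℝ))
    (hx : ∀ i, 1 ≤ i → i ≤ K + 1 → x i ∈ X)
    (hgdual : ∀ i, 1 ≤ i → i ≤ K → ∑ j, |g i j| ≤ M)
    (m : ℕ → (Fin n → ℝ) → ℝ)
    (hm : ∀ k y, m k y =
      ⨆ i : Fin k, (f (x (i + 1)) + ∑ j, g (i + 1) j * (y j - x (i + 1) j)))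
    (hgap : ∀ k, 1 ≤ k → k ≤ K →
      (⨅ i : Fin k, f (x (i + 1))) - m k (x (k + 1)) > ε) :
    ((K : ℝ) + 1) ≤ (l * M / ε + 1) ^ n := by
  have hfar (p q : Fin (K + 1)) (h : (p : ℕ) < q) : ε / M < ‖x (q + 1) - x (p + 1)‖ :=
    div_lt_norm_iterate_sub_of_gap hM hm (by omega) h (hgdual _ (by omega) (by omega))
      (hgap _ (by omega) (by omega))
  have hsep : Pairwise fun p q : Fin (K + 1) => ε / M < ‖x (p + 1) - x (q + 1)‖ := by
    intro p q hpq
    rcases lt_or_gt_of_ne (Fin.val_ne_of_ne hpq) with h | h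
    · exact norm_sub_rev (x (q + 1)) (x (p + 1)) ▸ hfar p q h
    · exact hfar q p h
  have hcard := card_le_of_pairwise_separated_in_box hl.le (div_pos hε hM) a
    (fun p : Fin (K + 1) => x (p + 1)) (fun p => hbox _ (hx _ (by omega) (by omega))) hsep
  simpa [div_div_eq_mul_div] using hcard

/-- Iteration complexity of Kelley's cutting plane method (Proposition 2.1, second part),
in `ℝⁿ` with the sup norm (the norm on `Fin n → ℝ` is `‖z‖ = max_j |z j|`). -/
theorem cutting_plane_complexity
    (n : ℕ) (hn : 0 < n) (l M ε : ℝ) (hl : 0 < l) (hM : 0 < M) (hε : 0 < ε)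
    (X : Set (Fin n → ℝ)) (hXne : X.Nonempty) (a : Fin n → ℝ)
    (hbox : ∀ x ∈ X, ∀ j, x j ∈ Set.Icc (a j) (a j + l))
    (f : (Fin n → ℝ) → ℝ)
    (hf : ∀ x ∈ X, ∀ y ∈ X, |f x - f y| ≤ M * ‖x - y‖)
    (K : ℕ) (hK : 0 < K)
    (x : ℕ → (Fin n → ℝ)) (g : ℕ → (Fin n → ℝ))
    (hx : ∀ i, 1 ≤ i → i ≤ K + 1 → x i ∈ X)
    (hgdual : ∀ i, 1 ≤ i → i ≤ K → ∑ j, |g i j| ≤ M)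
    (hcut : ∀ i, 1 ≤ i → i ≤ K → ∀ y ∈ X,
      f (x i) + ∑ j, g i j * (y j - x i j) ≤ f y)
    (m : ℕ → (Fin n → ℝ) → ℝ)
    (hm : ∀ k y, m k y =
      ⨆ i : Fin k, (f (x (i + 1)) + ∑ j, g (i + 1) j * (y j - x (i + 1) j)))
    (hmin : ∀ k, 1 ≤ k → k ≤ K → ∀ y ∈ X, m k (x (k + 1)) ≤ m k y)
    (hgap : ∀ k, 1 ≤ k → k ≤ K →
      (⨅ i : Fin k, f (x (i + 1))) - m k (x (k + 1)) > ε) :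
    ((K : ℝ) + 1) ≤ (l * M / ε + 1) ^ n :=
  cutting_plane_complexity_general n l M ε hl hM hε X a hbox f K x g hx hgdual m hm hgap
end

section
/- Let E be a real normed vector space, A ⊆ E, and let M, M̲ ≥ 0, δ ≥ 0, λ ∈ (0,1], ε ≥ 0. Let f, g : E → ℝ satisfy |f(u) − f(w)| ≤ M‖u − w‖ and |g(u) − g(w)| ≤ M̲‖u − w‖ for all u, w ∈ A. Suppose x, x′ ∈ A satisfy ‖x − x′‖ ≤ δ and f(x′) − g(x′) ≤ λε. Then: (i) f(x) − g(x) ≤ (M + M̲)δ + λε. (ii) If moreover S ⊆ A is a nonempty set with x ∈ S, g(y) ≤ f(y) for all y ∈ S, and g(x) ≤ g(y) for all y ∈ S (i.e., x minimizes g over S), then inf_{y∈S} f(y) − inf_{y∈S} g(y) ≤ (M + M̲)δ + λε. -/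
/-! The gap `f - g` is `(M + M')`-Lipschitz on `A`, so moving from the saturated point `x'` to
`x` raises it by at most `(M + M') δ`. If `x` minimizes the underestimator `g` over `S`, then
`inf_S g = g x` while `inf_S f ≤ f x`, so the gap of the infima is at most the gap at `x`. -/

theorem sub_le_sub_add_mul_norm_sub {E : Type*} [SeminormedAddCommGroup E] {A : Set E}
    {M M' : ℝ} {f g : E → ℝ}
    (hf : ∀ u ∈ A, ∀ w ∈ A, |f u - f w| ≤ M * ‖u - w‖)
    (hg : ∀ u ∈ A, ∀ w ∈ A, |g u - g w| ≤ M' * ‖u - w‖)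
    {u w : E} (hu : u ∈ A) (hw : w ∈ A) :
    f u - g u ≤ f w - g w + (M + M') * ‖u - w‖ := by
  have hfuw := (abs_le.mp (hf u hu w hw)).2
  have hgwu := (abs_le.mp (hg w hw u hu)).2
  rw [norm_sub_rev w u] at hgwu
  linarith

theorem sInf_image_sub_sInf_image_le {α : Type*} {S : Set α} {f g : α → ℝ} {x : α}
    (hxS : x ∈ S) (hgf : ∀ y ∈ S, g y ≤ f y) (hmin : IsMinOn g S x) :
    sInf (f '' S) - sInf (g '' S) ≤ f x - g x := by
  have hg_least : IsLeast (g '' S) (g x) :=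
    ⟨Set.mem_image_of_mem g hxS, Set.forall_mem_image.mpr fun y hy => isMinOn_iff.mp hmin y hy⟩
  have hf_bdd : BddBelow (f '' S) :=
    ⟨g x, Set.forall_mem_image.mpr fun y hy => (isMinOn_iff.mp hmin y hy).trans (hgf y hy)⟩
  have hf_inf : sInf (f '' S) ≤ f x := csInf_le hf_bdd (Set.mem_image_of_mem f hxS)
  rw [hg_least.csInf_eq]
  linarith

theorem saturation_propagation_general
    {E : Type*} [NormedAddCommGroup E]
    (A : Set E) (M M' δ lam ε : ℝ)
    (hM : 0 ≤ M) (hM' : 0 ≤ M')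
    (f g : E → ℝ)
    (hf : ∀ u ∈ A, ∀ w ∈ A, |f u - f w| ≤ M * ‖u - w‖)
    (hg : ∀ u ∈ A, ∀ w ∈ A, |g u - g w| ≤ M' * ‖u - w‖)
    (x x' : E) (hx : x ∈ A) (hx' : x' ∈ A)
    (hclose : ‖x - x'‖ ≤ δ)
    (hsat : f x' - g x' ≤ lam * ε) :
    (f x - g x ≤ (M + M') * δ + lam * ε) ∧
    (∀ S : Set E, S ⊆ A → S.Nonempty → x ∈ S →
      (∀ y ∈ S, g y ≤ f y) → (∀ y ∈ S, g x ≤ g y) →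
      sInf (f '' S) - sInf (g '' S) ≤ (M + M') * δ + lam * ε) := by
  have hgap : f x - g x ≤ (M + M') * δ + lam * ε :=
    calc f x - g x ≤ f x' - g x' + (M + M') * ‖x - x'‖ :=
          sub_le_sub_add_mul_norm_sub hf hg hx hx'
      _ ≤ lam * ε + (M + M') * δ := by gcongr
      _ = (M + M') * δ + lam * ε := add_comm _ _
  refine ⟨hgap, fun S _ _ hxS hgf hmin => ?_⟩
  exact (sInf_image_sub_sInf_image_le hxS hgf (isMinOn_iff.mpr hmin)).trans hgap

/-- Abstract form of Proposition 3.1: propagation of saturation in DDP. -/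
theorem saturation_propagation
    {E : Type*} [NormedAddCommGroup E] [NormedSpace ℝ E]
    (A : Set E) (M M' δ lam ε : ℝ)
    (hM : 0 ≤ M) (hM' : 0 ≤ M') (hδ : 0 ≤ δ)
    (hlam0 : 0 < lam) (hlam1 : lam ≤ 1) (hε : 0 ≤ ε)
    (f g : E → ℝ)
    (hf : ∀ u ∈ A, ∀ w ∈ A, |f u - f w| ≤ M * ‖u - w‖)
    (hg : ∀ u ∈ A, ∀ w ∈ A, |g u - g w| ≤ M' * ‖u - w‖)
    (x x' : E) (hx : x ∈ A) (hx' : x' ∈ A)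
    (hclose : ‖x - x'‖ ≤ δ)
    (hsat : f x' - g x' ≤ lam * ε) :
    (f x - g x ≤ (M + M') * δ + lam * ε) ∧
    (∀ S : Set E, S ⊆ A → S.Nonempty → x ∈ S →
      (∀ y ∈ S, g y ≤ f y) → (∀ y ∈ S, g x ≤ g y) →
      sInf (f '' S) - sInf (g '' S) ≤ (M + M') * δ + lam * ε) :=
  saturation_propagation_general A M M' δ lam ε hM hM' f g hf hg x x' hx hx' hclose hsat
end
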